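/- Let C be a locally presentable category with a cofibrantly generated weak factorization system (L, R) such that ∅ → X lies in L for every object X, equipped with an exact cylinder I and a class An(I) of right I-anodyne extensions. Then: (1) a morphism in the class L is I-final if and only if it is a right I-anodyne extension; (2) a right I-fibration is I-final if and only if it lies in the class R. -/

import Mathlib

set_option linter.unusedSectionVars false

open CategoryTheory CategoryTheory.Limits

universe v u

namespace Paper

variable {C : Type u} [Category.{v} C]

/-- The class of morphisms having the left lifting property against every morphism in `T`. -/
def llp (T : MorphismProperty C) : MorphismProperty C :=
  fun _ _ f => ∀ ⦃X Y : C⦄ (g : X ⟶ Y), T g → HasLiftingProperty f g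

/-- The class of morphisms having the right lifting property against every morphism in `T`. -/
def rlp (T : MorphismProperty C) : MorphismProperty C :=
  fun _ _ g => ∀ ⦃A B : C⦄ (f : A ⟶ B), T f → HasLiftingProperty f g

/-- The morphism property associated to a set of arrows. -/
def ofArrows (S : Set (Arrow C)) : MorphismProperty C :=
  fun _ _ f => Arrow.mk f ∈ S

/-- A (possibly large) category `J` is `κ`-filtered if every diagram in `J` indexed by a
small category of size `< κ` admits a cocone. -/
def IsCardinalFiltered (J : Cat.{v, v}) (κ : Cardinal.{v}) : Prop :=
  ∀ K : Cat.{v, v}, Cardinal.mk (Arrow K) < κ → ∀ F : K ⥤ J, Nonempty (Cocone F)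

/-- An object `X` is `κ`-presentable if `Hom(X, -)` preserves colimits of `κ`-filtered
diagrams. -/
def IsPresentableObj (κ : Cardinal.{v}) (X : C) : Prop :=
  ∀ J : Cat.{v, v}, IsCardinalFiltered J κ →
    PreservesColimitsOfShape J (coyoneda.obj (Opposite.op X))

/-- A category is locally presentable if it is cocomplete and there is a regular cardinal `κ`
and a small family of `κ`-presentable objects such that every object is a `κ`-filtered colimit
of objects of the family. -/
class LocallyPresentable (C : Type u) [Category.{v} C] extends HasColimits C : Prop where
  exists_presentable_generator :
    ∃ κ : Cardinal.{v}, κ.IsRegular ∧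
      ∃ (ι : Type v) (G : ι → C), (∀ i, IsPresentableObj κ (G i)) ∧
        ∀ X : C, ∃ (J : Cat.{v, v}) (F : J ⥤ C) (c : Cocone F),
          IsCardinalFiltered J κ ∧ Nonempty (IsColimit c) ∧
          (∀ j : J, ∃ i, Nonempty (F.obj j ≅ G i)) ∧ Nonempty (c.pt ≅ X)

/-- `(L, R)` is a cofibrantly generated weak factorization system such that every morphism
from the initial object is in `L`. -/
structure IsCofGenWFS [HasColimits C] (L R : MorphismProperty C) : Prop where
  exists_generating_set : ∃ S : Set (Arrow C), Small.{v} S ∧ L = llp (rlp (ofArrows S))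
  rlp_eq : R = rlp L
  factorization : ∀ ⦃X Y : C⦄ (f : X ⟶ Y),
    ∃ (Z : C) (i : X ⟶ Z) (p : Z ⟶ Y), L i ∧ R p ∧ i ≫ p = f
  initial_mem : ∀ X : C, L (initial.to X)

/-- A functorial cylinder on `C`. -/
structure Cylinder (C : Type u) [Category.{v} C] where
  I : C ⥤ C
  d0 : 𝟭 C ⟶ I
  d1 : 𝟭 C ⟶ I
  σ : I ⟶ 𝟭 C
  d0_σ : ∀ X : C, d0.app X ≫ σ.app X = 𝟙 X
  d1_σ : ∀ X : C, d1.app X ≫ σ.app X = 𝟙 X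

namespace Cylinder

variable (E : Cylinder C)

lemma d0_naturality' {K M : C} (f : K ⟶ M) :
    f ≫ E.d0.app M = E.d0.app K ≫ E.I.map f := by
  simpa using E.d0.naturality f

lemma d1_naturality' {K M : C} (f : K ⟶ M) :
    f ≫ E.d1.app M = E.d1.app K ≫ E.I.map f := by
  simpa using E.d1.naturality f

variable [HasColimits C]

/-- The canonical map `X ⊔ X ⟶ I(X)`. -/
noncomputable def ι (X : C) : X ⨿ X ⟶ E.I.obj X :=
  coprod.desc (E.d0.app X) (E.d1.app X)

lemma ι_naturality {K M : C} (f : K ⟶ M) :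
    coprod.map f f ≫ E.ι M = E.ι K ≫ E.I.map f := by
  have h0 := E.d0.naturality f
  have h1 := E.d1.naturality f
  simp only [Functor.id_map] at h0 h1
  apply coprod.hom_ext <;> simp [ι, h0, h1]

/-- The pushout-corner map `∂I ⊠ f : (M ⊔ M) ⊔_{K ⊔ K} I(K) ⟶ I(M)`. -/
noncomputable def boundaryBox {K M : C} (f : K ⟶ M) :
    pushout (coprod.map f f) (E.ι K) ⟶ E.I.obj M :=
  pushout.desc (E.ι M) (E.I.map f) (E.ι_naturality f)

/-- The pushout-corner map `∂0 ⊠ f : M ⊔_K I(K) ⟶ I(M)`. -/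
noncomputable def box0 {K M : C} (f : K ⟶ M) :
    pushout f (E.d0.app K) ⟶ E.I.obj M :=
  pushout.desc (E.d0.app M) (E.I.map f) (E.d0_naturality' f)

/-- The pushout-corner map `∂1 ⊠ f : M ⊔_K I(K) ⟶ I(M)`. -/
noncomputable def box1 {K M : C} (f : K ⟶ M) :
    pushout f (E.d1.app K) ⟶ E.I.obj M :=
  pushout.desc (E.d1.app M) (E.I.map f) (E.d1_naturality' f)

end Cylinder

/-- A cylinder is exact with respect to the class `L` if it preserves small colimits,
the maps `X ⊔ X ⟶ I(X)` are in `L`, and the pushout-corner maps of morphisms of `L` are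
again in `L`. -/
structure IsExactCylinder [HasColimits C] (E : Cylinder C) (L : MorphismProperty C) : Prop where
  preservesColimits : PreservesColimits E.I
  ι_mem : ∀ X : C, L (E.ι X)
  boundaryBox_mem : ∀ ⦃K M : C⦄ (f : K ⟶ M), L f → L (E.boundaryBox f)
  box0_mem : ∀ ⦃K M : C⦄ (f : K ⟶ M), L f → L (E.box0 f)
  box1_mem : ∀ ⦃K M : C⦄ (f : K ⟶ M), L f → L (E.box1 f)

/-- `An` is a class of right `I`-anodyne extensions. -/
structure IsRightAnodyneClass [HasColimits C] (E : Cylinder C) (L : MorphismProperty C)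
    (An : MorphismProperty C) : Prop where
  le : An ≤ L
  exists_generating_set : ∃ Λ : Set (Arrow C), Small.{v} Λ ∧ ofArrows Λ ≤ L ∧
    An = llp (rlp (ofArrows Λ))
  box1_mem : ∀ ⦃K M : C⦄ (f : K ⟶ M), L f → An (E.box1 f)
  boundaryBox_mem : ∀ ⦃K M : C⦄ (f : K ⟶ M), An f → An (E.boundaryBox f)

/-- `An` is a class of left `I`-anodyne extensions. -/
structure IsLeftAnodyneClass [HasColimits C] (E : Cylinder C) (L : MorphismProperty C)
    (An : MorphismProperty C) : Prop where
  le : An ≤ L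
  exists_generating_set : ∃ Λ : Set (Arrow C), Small.{v} Λ ∧ ofArrows Λ ≤ L ∧
    An = llp (rlp (ofArrows Λ))
  box0_mem : ∀ ⦃K M : C⦄ (f : K ⟶ M), L f → An (E.box0 f)
  boundaryBox_mem : ∀ ⦃K M : C⦄ (f : K ⟶ M), An f → An (E.boundaryBox f)

/-- A morphism is an `An`-fibration if it has the right lifting property against all
morphisms of `An`. -/
def IsFib (An : MorphismProperty C) {X Y : C} (p : X ⟶ Y) : Prop :=
  ∀ ⦃A B : C⦄ (f : A ⟶ B), An f → HasLiftingProperty f p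

/-- An object `W` is `An`-fibrant if the map `W ⟶ *` has the right lifting property against
all morphisms of `An`, i.e. every morphism to `W` extends along every morphism of `An`. -/
def IsFibrantObj (An : MorphismProperty C) (W : C) : Prop :=
  ∀ ⦃A B : C⦄ (f : A ⟶ B), An f → ∀ a : A ⟶ W, ∃ b : B ⟶ W, f ≫ b = a

namespace Cylinder

variable (E : Cylinder C)

/-- An `I`-homotopy from `f` to `g`. -/
def Homotopy {X Y : C} (f g : X ⟶ Y) : Prop :=
  ∃ h : E.I.obj X ⟶ Y, E.d0.app X ≫ h = f ∧ E.d1.app X ≫ h = g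

/-- `[X, Y]_I`, the quotient of `Hom(X, Y)` by the equivalence relation generated by
`I`-homotopy. -/
def HoHom (X Y : C) : Type v :=
  Quot (fun f g : X ⟶ Y => E.Homotopy f g)

/-- Precomposition `f^* : [B, W]_I ⟶ [A, W]_I`. -/
def precompQ {A B : C} (f : A ⟶ B) (W : C) : E.HoHom B W → E.HoHom A W :=
  Quot.lift (fun g => Quot.mk _ (f ≫ g)) (by
    rintro g g' ⟨h, h0, h1⟩
    apply Quot.sound
    refine ⟨E.I.map f ≫ h, ?_, ?_⟩
    · rw [← Category.assoc, ← E.d0_naturality' f, Category.assoc, h0]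
    · rw [← Category.assoc, ← E.d1_naturality' f, Category.assoc, h1])

end Cylinder

/-- `f` is a weak equivalence if it induces bijections `[B, W]_I ≅ [A, W]_I` for all
fibrant `W`. -/
def IsWeakEq (E : Cylinder C) (An : MorphismProperty C) {A B : C} (f : A ⟶ B) : Prop :=
  ∀ W : C, IsFibrantObj An W → Function.Bijective (E.precompQ f W)

/-- `f` is a retract of `f'`. -/
def IsRetractOf {X Y X' Y' : C} (f : X ⟶ Y) (f' : X' ⟶ Y') : Prop :=
  ∃ (i : X ⟶ X') (r : X' ⟶ X) (j : Y ⟶ Y') (s : Y' ⟶ Y),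
    i ≫ r = 𝟙 X ∧ j ≫ s = 𝟙 Y ∧ i ≫ f' = f ≫ j ∧ f' ≫ s = r ≫ f

/-- A model structure on a category: the classes of weak equivalences, cofibrations and
fibrations, subject to the two-out-of-three, retract, lifting and factorization axioms. -/
structure ModelStructure (C : Type u) [Category.{v} C] where
  weq : MorphismProperty C
  cof : MorphismProperty C
  fib : MorphismProperty C
  weq_id : ∀ X : C, weq (𝟙 X)
  weq_comp : ∀ ⦃X Y Z : C⦄ (f : X ⟶ Y) (g : Y ⟶ Z), weq f → weq g → weq (f ≫ g)
  weq_cancel_left : ∀ ⦃X Y Z : C⦄ (f : X ⟶ Y) (g : Y ⟶ Z), weq f → weq (f ≫ g) → weq g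
  weq_cancel_right : ∀ ⦃X Y Z : C⦄ (f : X ⟶ Y) (g : Y ⟶ Z), weq g → weq (f ≫ g) → weq f
  weq_retract : ∀ ⦃X Y X' Y' : C⦄ (f : X ⟶ Y) (f' : X' ⟶ Y'),
    IsRetractOf f f' → weq f' → weq f
  cof_retract : ∀ ⦃X Y X' Y' : C⦄ (f : X ⟶ Y) (f' : X' ⟶ Y'),
    IsRetractOf f f' → cof f' → cof f
  fib_retract : ∀ ⦃X Y X' Y' : C⦄ (f : X ⟶ Y) (f' : X' ⟶ Y'),
    IsRetractOf f f' → fib f' → fib f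
  lift_trivCof_fib : ∀ ⦃A B X Y : C⦄ (i : A ⟶ B) (p : X ⟶ Y),
    cof i → weq i → fib p → HasLiftingProperty i p
  lift_cof_trivFib : ∀ ⦃A B X Y : C⦄ (i : A ⟶ B) (p : X ⟶ Y),
    cof i → fib p → weq p → HasLiftingProperty i p
  fact_cof_trivFib : ∀ ⦃X Y : C⦄ (f : X ⟶ Y),
    ∃ (Z : C) (i : X ⟶ Z) (p : Z ⟶ Y), cof i ∧ fib p ∧ weq p ∧ i ≫ p = f
  fact_trivCof_fib : ∀ ⦃X Y : C⦄ (f : X ⟶ Y),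
    ∃ (Z : C) (i : X ⟶ Z) (p : Z ⟶ Y), cof i ∧ weq i ∧ fib p ∧ i ≫ p = f

/-- An object `W` is fibrant for a model structure if every morphism to `W` extends along
every trivial cofibration, i.e. `W ⟶ *` has the right lifting property against trivial
cofibrations. -/
def ModelStructure.Fibrant (M : ModelStructure C) (W : C) : Prop :=
  ∀ ⦃A B : C⦄ (i : A ⟶ B), M.cof i → M.weq i → ∀ a : A ⟶ W, ∃ b : B ⟶ W, i ≫ b = a


/-- Morphisms over `A` from `(X, u)` to `(W, q)`. -/
def OverHom {X W A : C} (u : X ⟶ A) (q : W ⟶ A) : Type v :=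
  { g : X ⟶ W // g ≫ q = u }

namespace Cylinder

variable (E : Cylinder C)

/-- An `I`-homotopy over `A`. -/
def OverHomotopy {X W A : C} (u : X ⟶ A) (q : W ⟶ A)
    (g g' : OverHom u q) : Prop :=
  ∃ h : E.I.obj X ⟶ W, E.d0.app X ≫ h = g.1 ∧ E.d1.app X ≫ h = g'.1 ∧
    h ≫ q = E.σ.app X ≫ u

/-- Homotopy classes of morphisms over `A`, `[(X, u), (W, q)]_{I_A}`. -/
def OverHoHom {X W A : C} (u : X ⟶ A) (q : W ⟶ A) : Type v :=
  Quot (E.OverHomotopy u q)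

/-- Precomposition `[(Y, p), (W, q)]_{I_A} ⟶ [(X, f ≫ p), (W, q)]_{I_A}`. -/
def overPrecompQ {X Y A W : C} (f : X ⟶ Y) (p : Y ⟶ A) (q : W ⟶ A) :
    E.OverHoHom p q → E.OverHoHom (f ≫ p) q :=
  Quot.lift (fun g => Quot.mk _ ⟨f ≫ g.1, by rw [Category.assoc, g.2]⟩)
    (by
      rintro g g' ⟨h, h0, h1, hq⟩
      apply Quot.sound
      refine ⟨E.I.map f ≫ h, ?_, ?_, ?_⟩
      · rw [← Category.assoc, ← E.d0_naturality' f, Category.assoc, h0]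
      · rw [← Category.assoc, ← E.d1_naturality' f, Category.assoc, h1]
      · have hnat := E.σ.naturality f
        simp only [Functor.id_map] at hnat
        simp only [Category.assoc, hq]
        rw [← Category.assoc, hnat, Category.assoc])

end Cylinder

/-- A morphism `f : X ⟶ Y` is `I`-final if for every object `A`, every `p : Y ⟶ A` and
every right `I`-fibration `q : W ⟶ A`, the induced map
`[(Y, p), (W, q)]_{I_A} ⟶ [(X, f ≫ p), (W, q)]_{I_A}` is bijective. -/
def IsFinal (E : Cylinder C) (An : MorphismProperty C) {X Y : C} (f : X ⟶ Y) : Prop :=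
  ∀ (A : C) (p : Y ⟶ A) ⦃W : C⦄ (q : W ⟶ A), IsFib An q →
    Function.Bijective (E.overPrecompQ f p q)

/-!
Over a right `I`-fibration, homotopy over the base is already an equivalence relation: two
homotopies with a common end glue to one between their other ends by lifting against the
anodyne map `∂1 ⊠ (∂0, ∂1)`. Lifting against `∂1 ⊠ i` likewise turns a lift that exists up to
homotopy over the base into a strict one.

Hence a final map of `L` lifts against every fibration, i.e. is anodyne; conversely an anodyne
map `f` is final, surjectivity coming from lifting against `f` and injectivity from lifting
against `∂I ⊠ f`. For a fibration `q`, finality and membership in `R` are both equivalent to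
`q` being shrinkable: having a section `s` and a homotopy over the base from `𝟙` to `q ≫ s`.
-/

attribute [local simp] coprod.inl_desc coprod.inr_desc coprod.inl_desc_assoc
  coprod.inr_desc_assoc

namespace Cylinder

variable (E : Cylinder C)

@[simp]
lemma d0_σ_assoc {X Z : C} (t : X ⟶ Z) : E.d0.app X ≫ E.σ.app X ≫ t = t := by
  rw [← Category.assoc, E.d0_σ]; exact Category.id_comp t

@[simp]
lemma d1_σ_assoc {X Z : C} (t : X ⟶ Z) : E.d1.app X ≫ E.σ.app X ≫ t = t := by
  rw [← Category.assoc, E.d1_σ]; exact Category.id_comp t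

lemma d0_naturality'_assoc {K M Z : C} (f : K ⟶ M) (t : E.I.obj M ⟶ Z) :
    f ≫ E.d0.app M ≫ t = E.d0.app K ≫ E.I.map f ≫ t :=
  E.d0.naturality_assoc f t

lemma d1_naturality'_assoc {K M Z : C} (f : K ⟶ M) (t : E.I.obj M ⟶ Z) :
    f ≫ E.d1.app M ≫ t = E.d1.app K ≫ E.I.map f ≫ t :=
  E.d1.naturality_assoc f t

lemma σ_naturality'_assoc {K M Z : C} (f : K ⟶ M) (t : M ⟶ Z) :
    E.I.map f ≫ E.σ.app M ≫ t = E.σ.app K ≫ f ≫ t :=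
  E.σ.naturality_assoc f t

variable [HasColimits C]

@[simp]
lemma inl_ι (X : C) : coprod.inl ≫ E.ι X = E.d0.app X := coprod.inl_desc _ _

@[simp]
lemma inr_ι (X : C) : coprod.inr ≫ E.ι X = E.d1.app X := coprod.inr_desc _ _

@[simp]
lemma inl_ι_assoc {X Z : C} (t : E.I.obj X ⟶ Z) : coprod.inl ≫ E.ι X ≫ t = E.d0.app X ≫ t := by
  rw [← Category.assoc, inl_ι]

@[simp]
lemma inr_ι_assoc {X Z : C} (t : E.I.obj X ⟶ Z) : coprod.inr ≫ E.ι X ≫ t = E.d1.app X ≫ t := by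
  rw [← Category.assoc, inr_ι]

lemma inl_box1 {K M : C} (i : K ⟶ M) : pushout.inl i (E.d1.app K) ≫ E.box1 i = E.d1.app M :=
  pushout.inl_desc _ _ _

lemma inr_box1 {K M : C} (i : K ⟶ M) : pushout.inr i (E.d1.app K) ≫ E.box1 i = E.I.map i :=
  pushout.inr_desc _ _ _

lemma exists_extension_of_box1 {K M W B : C} {i : K ⟶ M} {g : W ⟶ B}
    [HasLiftingProperty (E.box1 i) g] {c : M ⟶ W} {h : E.I.obj K ⟶ W}
    (hch : i ≫ c = E.d1.app K ≫ h) {H : E.I.obj M ⟶ B}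
    (hc : c ≫ g = E.d1.app M ≫ H) (hh : h ≫ g = E.I.map i ≫ H) :
    ∃ H' : E.I.obj M ⟶ W, E.d1.app M ≫ H' = c ∧ E.I.map i ≫ H' = h ∧ H' ≫ g = H := by
  have sq : CommSq (pushout.desc c h hch) (E.box1 i) g H :=
    ⟨pushout.hom_ext (by rw [pushout.inl_desc_assoc, hc, ← inl_box1, Category.assoc])
      (by rw [pushout.inr_desc_assoc, hh, ← inr_box1, Category.assoc])⟩
  refine ⟨sq.lift, ?_, ?_, sq.fac_right⟩
  · rw [← inl_box1, Category.assoc, sq.fac_left, pushout.inl_desc]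
  · rw [← inr_box1, Category.assoc, sq.fac_left, pushout.inr_desc]

lemma inl_boundaryBox {K M : C} (f : K ⟶ M) :
    pushout.inl (coprod.map f f) (E.ι K) ≫ E.boundaryBox f = E.ι M :=
  pushout.inl_desc _ _ _

lemma inr_boundaryBox {K M : C} (f : K ⟶ M) :
    pushout.inr (coprod.map f f) (E.ι K) ≫ E.boundaryBox f = E.I.map f :=
  pushout.inr_desc _ _ _

lemma overHomotopy_of_boundaryBox {X Y W A : C} {f : X ⟶ Y} {p : Y ⟶ A} {q : W ⟶ A}
    [HasLiftingProperty (E.boundaryBox f) q] (g₁ g₂ : OverHom p q) {h : E.I.obj X ⟶ W}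
    (h₀ : E.d0.app X ≫ h = f ≫ g₁.1) (h₁ : E.d1.app X ≫ h = f ≫ g₂.1)
    (hq : h ≫ q = E.σ.app X ≫ f ≫ p) :
    E.OverHomotopy p q g₁ g₂ := by
  have hend : coprod.map f f ≫ coprod.desc g₁.1 g₂.1 = E.ι X ≫ h := by
    ext <;> simp [h₀, h₁]
  have sq : CommSq (pushout.desc _ h hend) (E.boundaryBox f) q (E.σ.app Y ≫ p) := by
    refine ⟨pushout.hom_ext ?_ ?_⟩
    · rw [pushout.inl_desc_assoc, reassoc_of% inl_boundaryBox]
      ext <;> simp [g₁.2, g₂.2]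
    · rw [pushout.inr_desc_assoc, hq, reassoc_of% inr_boundaryBox, σ_naturality'_assoc]
  have hι : E.ι Y ≫ sq.lift = coprod.desc g₁.1 g₂.1 := by
    rw [← inl_boundaryBox, Category.assoc, sq.fac_left, pushout.inl_desc]
  refine ⟨sq.lift, ?_, ?_, sq.fac_right⟩
  · simpa using coprod.inl ≫= hι
  · simpa using coprod.inr ≫= hι

lemma overHomotopy_refl {X W A : C} {u : X ⟶ A} {r : W ⟶ A} (g : OverHom u r) :
    E.OverHomotopy u r g g :=
  ⟨E.σ.app X ≫ g.1, by simp, by simp, by rw [Category.assoc, g.2]⟩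

variable {E} {L An : MorphismProperty C}

lemma overHomotopy_of_common_target (hE : IsExactCylinder E L)
    (hAn : IsRightAnodyneClass E L An) {X W A : C} {u : X ⟶ A} {r : W ⟶ A} (hr : IsFib An r)
    {g₀ g₁ g₂ : OverHom u r} (h₁₀ : E.OverHomotopy u r g₁ g₀)
    (h₂₀ : E.OverHomotopy u r g₂ g₀) :
    E.OverHomotopy u r g₁ g₂ := by
  obtain ⟨h, h₀, h₁, hr₁⟩ := h₁₀
  obtain ⟨k, k₀, k₁, hr₂⟩ := h₂₀
  have := hE.preservesColimits
  have hI : IsColimit (BinaryCofan.mk (E.I.map (coprod.inl : X ⟶ X ⨿ X)) (E.I.map coprod.inr)) :=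
    isColimitOfHasBinaryCoproductOfPreservesColimit E.I X X
  obtain ⟨T, hTl, hTr⟩ : ∃ T : E.I.obj (X ⨿ X) ⟶ W,
      E.I.map coprod.inl ≫ T = h ∧ E.I.map coprod.inr ≫ T = k :=
    ⟨_, (BinaryCofan.IsColimit.desc' hI h k).2⟩
  have hend : E.ι X ≫ E.σ.app X ≫ g₀.1 = E.d1.app (X ⨿ X) ≫ T := by
    ext
    · rw [inl_ι_assoc, d0_σ_assoc, d1_naturality'_assoc, hTl, h₁]
    · rw [inr_ι_assoc, d1_σ_assoc, d1_naturality'_assoc, hTr, k₁]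
  have hTr' : T ≫ r = E.I.map (E.ι X) ≫ E.σ.app _ ≫ E.σ.app X ≫ u := by
    refine BinaryCofan.IsColimit.hom_ext hI ?_ ?_
    · change E.I.map coprod.inl ≫ T ≫ r = E.I.map coprod.inl ≫ E.I.map (E.ι X) ≫ _
      rw [reassoc_of% hTl, hr₁, ← Functor.map_comp_assoc, inl_ι, σ_naturality'_assoc, d0_σ_assoc]
    · change E.I.map coprod.inr ≫ T ≫ r = E.I.map coprod.inr ≫ E.I.map (E.ι X) ≫ _
      rw [reassoc_of% hTr, hr₂, ← Functor.map_comp_assoc, inr_ι, σ_naturality'_assoc, d1_σ_assoc]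
  have := hr _ (hAn.box1_mem _ (hE.ι_mem X))
  obtain ⟨H, -, hHι, hHr⟩ := E.exists_extension_of_box1 hend
    (by rw [Category.assoc, g₀.2, d1_σ_assoc]) hTr'
  have hH₀ : E.I.map (E.d0.app X) ≫ H = h := by
    rw [← inl_ι, Functor.map_comp, Category.assoc, hHι, hTl]
  have hH₁ : E.I.map (E.d1.app X) ≫ H = k := by
    rw [← inr_ι, Functor.map_comp, Category.assoc, hHι, hTr]
  refine ⟨E.d0.app _ ≫ H, ?_, ?_, by rw [Category.assoc, hHr, d0_σ_assoc]⟩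
  · rw [d0_naturality'_assoc]; exact (congrArg _ hH₀).trans h₀
  · rw [d0_naturality'_assoc]; exact (congrArg _ hH₁).trans k₀

lemma overHomotopy_equivalence (hE : IsExactCylinder E L) (hAn : IsRightAnodyneClass E L An)
    {X W A : C} {u : X ⟶ A} {r : W ⟶ A} (hr : IsFib An r) :
    _root_.Equivalence (E.OverHomotopy u r) where
  refl := E.overHomotopy_refl
  symm h := overHomotopy_of_common_target hE hAn hr (E.overHomotopy_refl _) h
  trans h₁ h₂ := overHomotopy_of_common_target hE hAn hr h₁
    (overHomotopy_of_common_target hE hAn hr (E.overHomotopy_refl _) h₂)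

lemma overHoHom_mk_eq_iff (hE : IsExactCylinder E L) (hAn : IsRightAnodyneClass E L An)
    {X W A : C} {u : X ⟶ A} {r : W ⟶ A} (hr : IsFib An r) {g g' : OverHom u r} :
    (Quot.mk _ g : E.OverHoHom u r) = Quot.mk _ g' ↔ E.OverHomotopy u r g g' :=
  Quot.eq.trans (overHomotopy_equivalence hE hAn hr).eqvGen_iff

end Cylinder

section Final

open Cylinder

variable {E : Cylinder C} {L An : MorphismProperty C}

lemma IsRightAnodyneClass.mem_of_forall_isFib [HasColimits C] (hAn : IsRightAnodyneClass E L An)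
    {X Y : C} {f : X ⟶ Y} (hf : ∀ ⦃W B : C⦄ (g : W ⟶ B), IsFib An g → HasLiftingProperty f g) :
    An f := by
  obtain ⟨Λ, -, -, hΛ⟩ := hAn.exists_generating_set
  rw [hΛ]
  intro W B g hg
  refine hf g fun _ _ i hi => ?_
  rw [hΛ] at hi
  exact hi g hg

variable [HasColimits C]

lemma hasLift_of_overHomotopy (hAn : IsRightAnodyneClass E L An) {K M W B : C}
    {a : K ⟶ W} {i : K ⟶ M} {g : W ⟶ B} {b : M ⟶ B} (sq : CommSq a i g b) (hi : L i)
    (hg : IsFib An g) {c : M ⟶ W} (hc : c ≫ g = b) {h : E.I.obj K ⟶ W}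
    (h₀ : E.d0.app K ≫ h = a) (h₁ : E.d1.app K ≫ h = i ≫ c)
    (hh : h ≫ g = E.σ.app K ≫ i ≫ b) :
    sq.HasLift := by
  have := hg _ (hAn.box1_mem i hi)
  obtain ⟨H, -, hHi, hHg⟩ := E.exists_extension_of_box1 (H := E.σ.app M ≫ b) h₁.symm
    (by rw [hc, d1_σ_assoc]) (by rw [hh, σ_naturality'_assoc])
  exact ⟨⟨⟨E.d0.app M ≫ H, by rw [d0_naturality'_assoc, hHi, h₀],
    by rw [Category.assoc, hHg, d0_σ_assoc]⟩⟩⟩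

lemma isFinal_of_anodyne (hE : IsExactCylinder E L) (hAn : IsRightAnodyneClass E L An)
    {X Y : C} {f : X ⟶ Y} (hf : An f) : IsFinal E An f := by
  intro A p W q hq
  refine ⟨?_, ?_⟩
  · rintro ⟨g₁⟩ ⟨g₂⟩ hg
    obtain ⟨h, h₀, h₁, hh⟩ := (overHoHom_mk_eq_iff hE hAn hq).1 hg
    have := hq _ (hAn.boundaryBox_mem f hf)
    exact Quot.sound (E.overHomotopy_of_boundaryBox g₁ g₂ h₀ h₁ hh)
  · rintro ⟨a⟩
    have := hq f hf
    have sq : CommSq a.1 f q p := ⟨a.2⟩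
    exact ⟨Quot.mk _ ⟨sq.lift, sq.fac_right⟩, congrArg (Quot.mk _) (Subtype.ext sq.fac_left)⟩

lemma anodyne_of_isFinal (hE : IsExactCylinder E L) (hAn : IsRightAnodyneClass E L An)
    {X Y : C} {f : X ⟶ Y} (hf : L f) (hfin : IsFinal E An f) : An f := by
  refine hAn.mem_of_forall_isFib fun W B g hg => ⟨fun {t b} sq => ?_⟩
  obtain ⟨⟨c⟩, hc⟩ := (hfin B b g hg).2 (Quot.mk _ ⟨t, sq.w⟩)
  obtain ⟨h, h₀, h₁, hh⟩ :=
    (overHomotopy_equivalence hE hAn hg).symm ((overHoHom_mk_eq_iff hE hAn hg).1 hc)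
  exact hasLift_of_overHomotopy hAn sq hf hg c.2 h₀ h₁ hh

/-- Shrinkable maps in the sense of Dold, with the homotopy taken over `Y`. -/
def IsShrinkable (E : Cylinder C) {X Y : C} (q : X ⟶ Y) : Prop :=
  ∃ s : Y ⟶ X, s ≫ q = 𝟙 Y ∧ ∃ h : E.I.obj X ⟶ X,
    E.d0.app X ≫ h = 𝟙 X ∧ E.d1.app X ≫ h = q ≫ s ∧ h ≫ q = E.σ.app X ≫ q

lemma isShrinkable_of_rlp {X Y : C} {q : X ⟶ Y} (hinit : L (initial.to Y)) (hι : L (E.ι X))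
    (hq : rlp L q) : IsShrinkable E q := by
  have := hq _ hinit
  have sq₀ : CommSq (initial.to X) (initial.to Y) q (𝟙 Y) := ⟨initial.hom_ext _ _⟩
  have hs : sq₀.lift ≫ q = 𝟙 Y := sq₀.fac_right
  have := hq _ hι
  have sq₁ : CommSq (coprod.desc (𝟙 X) (q ≫ sq₀.lift)) (E.ι X) q (E.σ.app X ≫ q) :=
    ⟨by ext <;> simp [hs]⟩
  refine ⟨sq₀.lift, hs, sq₁.lift, ?_, ?_, sq₁.fac_right⟩
  · rw [← inl_ι, Category.assoc, sq₁.fac_left, coprod.inl_desc]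
  · rw [← inr_ι, Category.assoc, sq₁.fac_left, coprod.inr_desc]

lemma IsShrinkable.isFinal {X Y : C} {q : X ⟶ Y} (hq : IsShrinkable E q) : IsFinal E An q := by
  obtain ⟨s, hs, h, h₀, h₁, hh⟩ := hq
  intro A u W r _
  refine ⟨?_, ?_⟩
  · let precompSection : E.OverHoHom (q ≫ u) r → E.OverHoHom u r :=
      Quot.map (fun g => ⟨s ≫ g.1, by rw [Category.assoc, g.2, reassoc_of% hs]⟩)
        fun g g' ⟨H, H₀, H₁, Hr⟩ => ⟨E.I.map s ≫ H,
          by rw [← d0_naturality'_assoc, H₀], by rw [← d1_naturality'_assoc, H₁],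
          by rw [Category.assoc, Hr, σ_naturality'_assoc, reassoc_of% hs]⟩
    refine Function.LeftInverse.injective (g := precompSection) ?_
    rintro ⟨g⟩
    exact congrArg (Quot.mk _) (Subtype.ext ((reassoc_of% hs) g.1))
  · rintro ⟨a⟩
    refine ⟨Quot.mk _ ⟨s ≫ a.1, by rw [Category.assoc, a.2, reassoc_of% hs]⟩,
      (Quot.sound ⟨h ≫ a.1, ?_, ?_, ?_⟩).symm⟩
    · rw [reassoc_of% h₀]
    · rw [reassoc_of% h₁]
    · rw [Category.assoc, a.2, reassoc_of% hh]

lemma isShrinkable_of_isFinal (hE : IsExactCylinder E L) (hAn : IsRightAnodyneClass E L An)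
    {X Y : C} {q : X ⟶ Y} (hq : IsFib An q) (hfin : IsFinal E An q) : IsShrinkable E q := by
  obtain ⟨⟨s⟩, hs⟩ := (hfin Y (𝟙 Y) q hq).2 (Quot.mk _ ⟨𝟙 X, by simp⟩)
  obtain ⟨h, h₀, h₁, hh⟩ :=
    (overHomotopy_equivalence hE hAn hq).symm ((overHoHom_mk_eq_iff hE hAn hq).1 hs)
  exact ⟨s.1, s.2, h, h₀, h₁, by simpa using hh⟩

lemma IsShrinkable.rlp (hAn : IsRightAnodyneClass E L An) {X Y : C} {q : X ⟶ Y}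
    (hq : IsFib An q) (hsh : IsShrinkable E q) : rlp L q := by
  obtain ⟨s, hs, h, h₀, h₁, hh⟩ := hsh
  refine fun K M i hi => ⟨fun {t b} sq => hasLift_of_overHomotopy hAn sq hi hq
    (c := b ≫ s) (h := E.I.map t ≫ h) ?_ ?_ ?_ ?_⟩
  · rw [Category.assoc, hs, Category.comp_id]
  · rw [← d0_naturality'_assoc, h₀, Category.comp_id]
  · rw [← d1_naturality'_assoc, h₁, reassoc_of% sq.w]
  · rw [Category.assoc, hh, σ_naturality'_assoc, sq.w]

end Final

/-- Lemma 3.6 (finalfibrations): a morphism of `L` is `I`-final iff it is right `I`-anodyne;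
a right `I`-fibration is `I`-final iff it is in `R`. -/
theorem statement_12    {C : Type u} [Category.{v} C] [LocallyPresentable C]
    (L R : MorphismProperty C) (hW : IsCofGenWFS L R)
    (E : Cylinder C) (hE : IsExactCylinder E L)
    (An : MorphismProperty C) (hAn : IsRightAnodyneClass E L An) :
    (∀ ⦃X Y : C⦄ (f : X ⟶ Y), L f → (IsFinal E An f ↔ An f)) ∧
    (∀ ⦃X Y : C⦄ (p : X ⟶ Y), IsFib An p → (IsFinal E An p ↔ R p)) := by
  refine ⟨fun X Y f hf => ⟨anodyne_of_isFinal hE hAn hf, isFinal_of_anodyne hE hAn⟩,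
    fun X Y p hp => ?_⟩
  rw [hW.rlp_eq]
  exact ⟨fun hfin => (isShrinkable_of_isFinal hE hAn hp hfin).rlp hAn hp,
    fun hR => (isShrinkable_of_rlp (hW.initial_mem Y) (hE.ι_mem X) hR).isFinal⟩

end Paper
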